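/- arXiv:1203.5581 — 3 statements merged into one kernel-verified Lean document; each statement's English description precedes it below -/
import Mathlib

section
/- Fix ε ≠ 0. For every natural number N and every r > 0, Z_N(−tanh r) = ε^N · (sinh(2r)/2)^{1/(2ε)} · f^{(N)}(r), where f : (0, ∞) → ℝ is the function f(r) = (sinh(2r)/2)^{−1/(2ε)}, f^{(N)} denotes its N-th derivative, and the real powers of the positive quantity sinh(2r)/2 are taken. -/
/-- The discrete stochastic process with memory: binomial transfer probabilities
with coupling `ε`. -/
noncomputable def P (ε : ℝ) : ℕ → ℤ → ℝ
  | 0, x => if x = 0 then 1 else 0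
  | n + 1, x =>
      P ε n (x + 1) * (1 / 2 - ((x : ℝ) + 1) * ε) +
      P ε n (x - 1) * (1 / 2 + ((x : ℝ) - 1) * ε)

/-- The generating function `Z_n(q) = Σ_{x ∈ ℤ} P(n, x) · q^x` (integer powers). -/
noncomputable def Z (ε : ℝ) (n : ℕ) (q : ℝ) : ℝ := ∑' x : ℤ, P ε n x * q ^ x

/-!
Put `q = -tanh s` and `f s = (sinh (2 s) / 2) ^ (-1/(2ε))`. Then `dq/ds = q² - 1`,
`(q + q⁻¹)/2 = -coth (2 s)` and `f'/f = -coth (2 s) / ε`, while one step of the walk gives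
`Z_{n+1}(q) = (q + q⁻¹)/2 · Z_n(q) + ε (q² - 1) Z_n'(q)`. Together these say that
`g_n s = f s · Z_n(-tanh s)` satisfies `ε g_n' = g_{n+1}`; since `g_0 = f`, `g_n = εⁿ f⁽ⁿ⁾`.
-/

open Real

section Support

variable (ε : ℝ)

theorem P_eq_zero_of_lt_abs : ∀ (n : ℕ) (x : ℤ), (n : ℤ) < |x| → P ε n x = 0
  | 0, x, hx => by simp [P, abs_pos.mp hx]
  | n + 1, x, hx => by
    rw [lt_abs] at hx
    have h₁ : (n : ℤ) < |x + 1| := by rw [lt_abs]; omega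
    have h₂ : (n : ℤ) < |x - 1| := by rw [lt_abs]; omega
    simp [P, P_eq_zero_of_lt_abs n _ h₁, P_eq_zero_of_lt_abs n _ h₂]

theorem P_eq_zero_of_notMem_Icc {n : ℕ} {x : ℤ} (hx : x ∉ Finset.Icc (-(n : ℤ)) n) :
    P ε n x = 0 :=
  P_eq_zero_of_lt_abs ε n x <| by
    rw [Finset.mem_Icc] at hx
    rw [lt_abs]
    omega

theorem summable_P_mul (n : ℕ) (f : ℤ → ℝ) : Summable fun x => P ε n x * f x :=
  summable_of_ne_finset_zero fun x hx => by rw [P_eq_zero_of_notMem_Icc ε hx, zero_mul]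

theorem tsum_P_mul_eq_sum (n : ℕ) (f : ℤ → ℝ) :
    ∑' x, P ε n x * f x = ∑ x ∈ Finset.Icc (-(n : ℤ)) n, P ε n x * f x :=
  tsum_eq_sum fun x hx => by rw [P_eq_zero_of_notMem_Icc ε hx, zero_mul]

end Support

theorem tsum_P_succ_mul (ε : ℝ) (n : ℕ) (f : ℤ → ℝ) :
    ∑' x, P ε (n + 1) x * f x =
      ∑' x, P ε n x * ((1 / 2 - x * ε) * f (x - 1) + (1 / 2 + x * ε) * f (x + 1)) := by
  set down : ℤ → ℝ := fun x => P ε n (x + 1) * (1 / 2 - ((x : ℝ) + 1) * ε) * f x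
  set up : ℤ → ℝ := fun x => P ε n (x - 1) * (1 / 2 + ((x : ℝ) - 1) * ε) * f x
  have h_down : (down ∘ Equiv.subRight 1) = fun x => P ε n x * ((1 / 2 - x * ε) * f (x - 1)) := by
    ext x
    simp only [Function.comp_apply, Equiv.subRight_apply, sub_add_cancel, Int.cast_sub,
      Int.cast_one, down]
    ring
  have h_up : (up ∘ Equiv.addRight 1) = fun x => P ε n x * ((1 / 2 + x * ε) * f (x + 1)) := by
    ext x
    simp only [Equiv.coe_addRight, Function.comp_apply, add_sub_cancel_right, Int.cast_add,
      Int.cast_one, up]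
    ring
  have hs_down : Summable down := by
    rw [← (Equiv.subRight (1 : ℤ)).summable_iff, h_down]; exact summable_P_mul ε n _
  have hs_up : Summable up := by
    rw [← (Equiv.addRight (1 : ℤ)).summable_iff, h_up]; exact summable_P_mul ε n _
  calc ∑' x, P ε (n + 1) x * f x = ∑' x, down x + ∑' x, up x := by
        rw [← hs_down.tsum_add hs_up]
        congr 1 with x
        simp only [P, down, up]
        ring
    _ = ∑' x, (down ∘ Equiv.subRight 1) x + ∑' x, (up ∘ Equiv.addRight 1) x :=
        congrArg₂ (· + ·) ((Equiv.subRight 1).tsum_eq down).symm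
          ((Equiv.addRight 1).tsum_eq up).symm
    _ = _ := by
        rw [h_down, h_up, ← (summable_P_mul ε n _).tsum_add (summable_P_mul ε n _)]
        simp only [mul_add]

section GeneratingFunction

variable (ε : ℝ) {q : ℝ}

theorem Z_zero (q : ℝ) : Z ε 0 q = 1 := by
  rw [Z, tsum_eq_single 0 fun x hx => by simp [P, hx]]
  simp [P]

theorem hasDerivAt_Z (n : ℕ) (hq : q ≠ 0) :
    HasDerivAt (Z ε n) (∑' x, P ε n x * (x * q ^ (x - 1))) q := by
  have hZ : Z ε n = fun q => ∑ x ∈ Finset.Icc (-(n : ℤ)) n, P ε n x * q ^ x := by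
    ext q; exact tsum_P_mul_eq_sum ε n _
  rw [hZ, tsum_P_mul_eq_sum]
  exact HasDerivAt.fun_sum fun x _ => (hasDerivAt_zpow x q (Or.inl hq)).const_mul _

theorem Z_succ (n : ℕ) (hq : q ≠ 0) :
    Z ε (n + 1) q =
      (q + q⁻¹) / 2 * Z ε n q + ε * (q ^ 2 - 1) * ∑' x, P ε n x * (x * q ^ (x - 1)) := by
  have h_step (x : ℤ) : (1 / 2 - x * ε) * q ^ (x - 1) + (1 / 2 + x * ε) * q ^ (x + 1) =
      (q + q⁻¹) / 2 * q ^ x + ε * (q ^ 2 - 1) * (x * q ^ (x - 1)) := by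
    rw [zpow_add_one₀ hq, zpow_sub_one₀ hq]
    field_simp
    ring
  rw [Z, tsum_P_succ_mul, Z, ← tsum_mul_left, ← tsum_mul_left,
    ← (summable_P_mul ε n _).mul_left _ |>.tsum_add ((summable_P_mul ε n _).mul_left _)]
  congr 1 with x
  rw [h_step]
  ring

end GeneratingFunction

theorem hasDerivAt_neg_tanh (s : ℝ) : HasDerivAt (fun s => -tanh s) ((-tanh s) ^ 2 - 1) s := by
  have h : HasDerivAt (fun s => -(sinh s / cosh s)) _ s :=
    ((hasDerivAt_sinh s).fun_div (hasDerivAt_cosh s) (cosh_pos s).ne').fun_neg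
  simp only [← tanh_eq_sinh_div_cosh] at h
  refine h.congr_deriv ?_
  have := cosh_sq_sub_sinh_sq s
  rw [tanh_eq_sinh_div_cosh]
  field_simp
  linarith

theorem neg_tanh_add_inv_div_two {s : ℝ} (hs : s ≠ 0) :
    (-tanh s + (-tanh s)⁻¹) / 2 = -(cosh (2 * s) / sinh (2 * s)) := by
  have hc := (cosh_pos s).ne'
  have hsh : sinh s ≠ 0 := sinh_ne_zero.mpr hs
  rw [cosh_two_mul, sinh_two_mul, tanh_eq_sinh_div_cosh]
  field_simp
  ring

theorem hasDerivAt_sinh_two_mul_div_two_rpow (a : ℝ) {s : ℝ} (hs : s ≠ 0) :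
    HasDerivAt (fun s => (sinh (2 * s) / 2) ^ a)
      (2 * a * (cosh (2 * s) / sinh (2 * s)) * (sinh (2 * s) / 2) ^ a) s := by
  have hsh : sinh (2 * s) ≠ 0 := sinh_ne_zero.mpr (by simpa using hs)
  have hu : HasDerivAt (fun s => sinh (2 * s) / 2) (cosh (2 * s)) s := by
    simpa using (((hasDerivAt_id s).const_mul 2).sinh).div_const 2
  convert hu.rpow_const (p := a) (Or.inl (by simpa using hsh)) using 1
  rw [rpow_sub_one (by simpa using hsh)]
  field_simp

noncomputable def weightedZ (ε : ℝ) (n : ℕ) (s : ℝ) : ℝ :=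
  (sinh (2 * s) / 2) ^ (-(1 / (2 * ε))) * Z ε n (-tanh s)

theorem hasDerivAt_weightedZ {ε : ℝ} (hε : ε ≠ 0) (n : ℕ) {s : ℝ} (hs : s ≠ 0) :
    HasDerivAt (weightedZ ε n) (weightedZ ε (n + 1) s / ε) s := by
  have hq : -tanh s ≠ 0 := by
    simpa [tanh_eq_sinh_div_cosh, (cosh_pos s).ne'] using hs
  have hZ := (hasDerivAt_Z ε n hq).comp s (hasDerivAt_neg_tanh s)
  refine ((hasDerivAt_sinh_two_mul_div_two_rpow _ hs).mul hZ).congr_deriv ?_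
  rw [weightedZ, Z_succ ε n hq, neg_tanh_add_inv_div_two hs, Function.comp_apply]
  field_simp

theorem pow_mul_iteratedDeriv_eq_weightedZ {ε : ℝ} (hε : ε ≠ 0) (n : ℕ) {s : ℝ} (hs : s ≠ 0) :
    ε ^ n * iteratedDeriv n (fun s => (sinh (2 * s) / 2) ^ (-(1 / (2 * ε)))) s =
      weightedZ ε n s := by
  induction n generalizing s with
  | zero => simp [weightedZ, Z_zero]
  | succ n ih =>
    have h_near : iteratedDeriv n (fun s => (sinh (2 * s) / 2) ^ (-(1 / (2 * ε))))
        =ᶠ[nhds s] fun t => (ε ^ n)⁻¹ * weightedZ ε n t := by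
      filter_upwards [isOpen_ne.mem_nhds hs] with t ht
      rw [← ih ht, inv_mul_cancel_left₀ (pow_ne_zero n hε)]
    rw [iteratedDeriv_succ, h_near.deriv_eq, ((hasDerivAt_weightedZ hε n hs).const_mul _).deriv,
      pow_succ]
    field_simp

/-- for `ε ≠ 0` and `r > 0`,
`Z_N(−tanh r) = ε^N · (sinh(2r)/2)^{1/(2ε)} · f^{(N)}(r)`
where `f(r) = (sinh(2r)/2)^{−1/(2ε)}` (real powers). -/
theorem Z_closed_derivative_form (ε : ℝ) (hε : ε ≠ 0) (N : ℕ) (r : ℝ) (hr : 0 < r) :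
    Z ε N (-Real.tanh r) =
      ε ^ N * (Real.sinh (2 * r) / 2) ^ (1 / (2 * ε)) *
        iteratedDeriv N (fun s : ℝ => (Real.sinh (2 * s) / 2) ^ (-(1 / (2 * ε)))) r := by
  have hu : 0 < sinh (2 * r) / 2 := by
    have := sinh_pos_iff.mpr (by linarith : 0 < 2 * r)
    linarith
  rw [mul_right_comm, pow_mul_iteratedDeriv_eq_weightedZ hε N hr.ne', weightedZ, mul_right_comm,
    ← rpow_add hu, neg_add_cancel, rpow_zero, one_mul]
end

section
/- Closed form of the variance: let N ≥ 1 and suppose 0 < |ε| < 1/(2N). Then m₂(N) = (2ε)^{N−1} · B · Σ_{k=1}^{N} [ (−1)^k · k / (1/(2ε) + k) ] · C(N,k) · ( (−k)^N − (2−k)^N ) / 2, where C denotes the binomial coefficient and B = (1/N!) · Π_{i=0}^{N−1} (1/(2ε) + N − i). -/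
/-- The `k`-th moment `m_k(n) = Σ_{x ∈ ℤ} x^k · P(n, x)`. -/
noncomputable def m (ε : ℝ) (k n : ℕ) : ℝ := ∑' x : ℤ, (x : ℝ) ^ k * P ε n x



lemma P_eq_zero (ε : ℝ) : ∀ n : ℕ, ∀ x : ℤ, (n : ℕ) < x.natAbs → P ε n x = 0 := by
  intro n
  induction n with
  | zero => intro x hx; simp only [P]; rw [if_neg]; omega
  | succ n ih =>
      intro x hx
      simp only [P]
      rw [ih (x + 1) (by omega), ih (x - 1) (by omega)]
      ring

lemma m_eq_sum (ε : ℝ) (k n : ℕ) :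
    m ε k n = ∑ x ∈ Finset.Icc (-(n : ℤ)) n, (x : ℝ) ^ k * P ε n x := by
  apply tsum_eq_sum
  intro x hx
  rw [P_eq_zero ε n x (by simp only [Finset.mem_Icc] at hx; omega), mul_zero]

lemma master (ε : ℝ) (n : ℕ) (f : ℤ → ℝ) :
    ∑ x ∈ Finset.Icc (-(n + 1 : ℤ)) (n + 1), f x * P ε (n + 1) x =
      ∑ y ∈ Finset.Icc (-(n : ℤ)) n,
        (f (y - 1) * (1 / 2 - (y : ℝ) * ε) + f (y + 1) * (1 / 2 + (y : ℝ) * ε)) * P ε n y := by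
  have h1 : ∑ x ∈ Finset.Icc (-(n + 1 : ℤ)) (n + 1), f x * (P ε n (x + 1) * (1 / 2 - ((x : ℝ) + 1) * ε)) =
      ∑ y ∈ Finset.Icc (-(n : ℤ)) n, f (y - 1) * (1 / 2 - (y : ℝ) * ε) * P ε n y := by
    rw [Finset.sum_nbij' (i := fun x => x + 1) (j := fun y => y - 1)
      (s := Finset.Icc (-(n + 1 : ℤ)) (n + 1)) (t := Finset.Icc (-(n : ℤ)) (n + 2))
      (f := fun x => f x * (P ε n (x + 1) * (1 / 2 - ((x : ℝ) + 1) * ε)))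
      (g := fun y => f (y - 1) * (1 / 2 - (y : ℝ) * ε) * P ε n y)]
    · refine (Finset.sum_subset (fun y hy => ?_) (fun y hy hy2 => ?_)).symm
      · simp only [Finset.mem_Icc] at *; omega
      · rw [P_eq_zero ε n y (by simp only [Finset.mem_Icc] at hy hy2 ⊢; omega), mul_zero]
    · intro x hx; simp only [Finset.mem_Icc] at *; omega
    · intro y hy; simp only [Finset.mem_Icc] at *; omega
    · intro x _; ring
    · intro y _; ring
    · intro x _; push_cast; ring_nf
  have h2 : ∑ x ∈ Finset.Icc (-(n + 1 : ℤ)) (n + 1), f x * (P ε n (x - 1) * (1 / 2 + ((x : ℝ) - 1) * ε)) =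
      ∑ y ∈ Finset.Icc (-(n : ℤ)) n, f (y + 1) * (1 / 2 + (y : ℝ) * ε) * P ε n y := by
    rw [Finset.sum_nbij' (i := fun x => x - 1) (j := fun y => y + 1)
      (s := Finset.Icc (-(n + 1 : ℤ)) (n + 1)) (t := Finset.Icc (-(n : ℤ) - 2) n)
      (f := fun x => f x * (P ε n (x - 1) * (1 / 2 + ((x : ℝ) - 1) * ε)))
      (g := fun y => f (y + 1) * (1 / 2 + (y : ℝ) * ε) * P ε n y)]
    · refine (Finset.sum_subset (fun y hy => ?_) (fun y hy hy2 => ?_)).symm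
      · simp only [Finset.mem_Icc] at *; omega
      · rw [P_eq_zero ε n y (by simp only [Finset.mem_Icc] at hy hy2 ⊢; omega), mul_zero]
    · intro x hx; simp only [Finset.mem_Icc] at *; omega
    · intro y hy; simp only [Finset.mem_Icc] at *; omega
    · intro x _; ring
    · intro y _; ring
    · intro x _; push_cast; ring_nf
  calc ∑ x ∈ Finset.Icc (-(n + 1 : ℤ)) (n + 1), f x * P ε (n + 1) x
      = ∑ x ∈ Finset.Icc (-(n + 1 : ℤ)) (n + 1),
          (f x * (P ε n (x + 1) * (1 / 2 - ((x : ℝ) + 1) * ε)) +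
           f x * (P ε n (x - 1) * (1 / 2 + ((x : ℝ) - 1) * ε))) := by
        apply Finset.sum_congr rfl; intro x _; show f x * P ε (n+1) x = _
        rw [show P ε (n+1) x = P ε n (x + 1) * (1 / 2 - ((x : ℝ) + 1) * ε) +
          P ε n (x - 1) * (1 / 2 + ((x : ℝ) - 1) * ε) from rfl]; ring
    _ = _ := by
        rw [Finset.sum_add_distrib, h1, h2, ← Finset.sum_add_distrib]
        apply Finset.sum_congr rfl; intro y _; ring

lemma S0 (ε : ℝ) : ∀ n : ℕ, ∑ x ∈ Finset.Icc (-(n : ℤ)) n, P ε n x = 1 := by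
  intro n
  induction n with
  | zero => simp [P]
  | succ n ih =>
      have := master ε n (fun _ => 1)
      simp only [one_mul] at this
      push_cast at this ⊢
      rw [this, Finset.sum_congr rfl (fun y _ => by ring :
        ∀ y ∈ Finset.Icc (-(n : ℤ)) n,
          (1 / 2 - (y : ℝ) * ε + (1 / 2 + (y : ℝ) * ε)) * P ε n y = P ε n y), ih]

lemma S2 (ε : ℝ) : ∀ n : ℕ,
    4 * ε * ∑ x ∈ Finset.Icc (-(n : ℤ)) n, (x : ℝ) ^ 2 * P ε n x = (1 + 4 * ε) ^ n - 1 := by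
  intro n
  induction n with
  | zero => simp [P]
  | succ n ih =>
      have hm := master ε n (fun x => (x : ℝ) ^ 2)
      push_cast at hm ⊢
      rw [hm]
      have key : ∑ y ∈ Finset.Icc (-(n : ℤ)) n,
          (((y : ℝ) - 1) ^ 2 * (1 / 2 - (y : ℝ) * ε) + ((y : ℝ) + 1) ^ 2 * (1 / 2 + (y : ℝ) * ε)) * P ε n y
          = (1 + 4 * ε) * ∑ y ∈ Finset.Icc (-(n : ℤ)) n, (y : ℝ) ^ 2 * P ε n y
            + ∑ y ∈ Finset.Icc (-(n : ℤ)) n, P ε n y := by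
        rw [Finset.mul_sum, ← Finset.sum_add_distrib]
        apply Finset.sum_congr rfl; intro y _; ring
      rw [key, S0 ε n]
      linear_combination (1 + 4 * ε) * ih

lemma m2_closed (ε : ℝ) (n : ℕ) (hε : ε ≠ 0) :
    m ε 2 n = ((1 + 4 * ε) ^ n - 1) / (4 * ε) := by
  rw [m_eq_sum]
  have := S2 ε n
  field_simp
  linarith [this]

open Polynomial Finset

lemma prodIccShift (c : ℝ) : ∀ M : ℕ, ∀ cn : ℕ, (cn : ℝ) = c →
    ∏ j ∈ Finset.Icc (cn + 1) (cn + M), ((j : ℝ) - c) = (M.factorial : ℝ) := by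
  intro M
  induction M with
  | zero => intro cn hc; simp
  | succ M ih =>
      intro cn hc
      rw [show cn + (M + 1) = (cn + M) + 1 from rfl,
        Finset.prod_Icc_succ_top (by omega), ih cn hc, ← hc]
      push_cast [Nat.factorial_succ]
      ring

lemma prodIccId (M : ℕ) : ∏ i ∈ Finset.Icc 1 M, (i : ℝ) = (M.factorial : ℝ) := by
  have := prodIccShift 0 M 0 (by norm_num)
  simpa using this

lemma W_eval (N k : ℕ) (hk1 : 1 ≤ k) (hkN : k ≤ N) :
    ∏ j ∈ (Finset.Icc 1 N).erase k, ((j : ℝ) - (k : ℝ)) =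
      (-1 : ℝ) ^ (k - 1) * ((k - 1).factorial : ℝ) * ((N - k).factorial : ℝ) := by
  have hsplit : (Finset.Icc 1 N).erase k = Finset.Icc 1 (k - 1) ∪ Finset.Icc (k + 1) N := by
    ext j
    simp only [Finset.mem_erase, Finset.mem_Icc, Finset.mem_union]
    omega
  have hdisj : Disjoint (Finset.Icc 1 (k - 1)) (Finset.Icc (k + 1) N) := by
    rw [Finset.disjoint_left]
    intro j hj hj2
    simp only [Finset.mem_Icc] at hj hj2
    omega
  rw [hsplit, Finset.prod_union hdisj]
  have h2 : ∏ j ∈ Finset.Icc (k + 1) N, ((j : ℝ) - k) = ((N - k).factorial : ℝ) := by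
    have := prodIccShift (k : ℝ) (N - k) k rfl
    rw [show k + (N - k) = N from by omega] at this
    exact this
  have h1 : ∏ j ∈ Finset.Icc 1 (k - 1), ((j : ℝ) - k)
      = (-1 : ℝ) ^ (k - 1) * ((k - 1).factorial : ℝ) := by
    have e1 : ∏ j ∈ Finset.Icc 1 (k - 1), ((j : ℝ) - k)
        = ∏ j ∈ Finset.Icc 1 (k - 1), (-1 : ℝ) * ((k : ℝ) - j) :=
      Finset.prod_congr rfl fun j _ => by ring
    have e2 : ∏ j ∈ Finset.Icc 1 (k - 1), ((k : ℝ) - j)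
        = ∏ i ∈ Finset.Icc 1 (k - 1), (i : ℝ) := by
      refine Finset.prod_nbij' (fun j => k - j) (fun i => k - i) ?_ ?_ ?_ ?_ ?_
      · intro x hx; simp only [Finset.mem_Icc] at *; omega
      · intro x hx; simp only [Finset.mem_Icc] at *; omega
      · intro x hx; simp only [Finset.mem_Icc] at *; omega
      · intro x hx; simp only [Finset.mem_Icc] at *; omega
      · intro x hx
        simp only [Finset.mem_Icc] at hx
        rw [Nat.cast_sub (by omega)]
    rw [e1, Finset.prod_mul_distrib, Finset.prod_const, e2, prodIccId, Nat.card_Icc]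
    norm_num
  rw [h1, h2]
  try ring

lemma lagrange_key (N : ℕ) (hN : 1 ≤ N) (a : ℝ) :
    (a + 2) ^ N - a ^ N =
      ∑ k ∈ Finset.Icc 1 N, ((2 - (k : ℝ)) ^ N - (-(k : ℝ)) ^ N) *
        ∏ j ∈ (Finset.Icc 1 N).erase k, (((j : ℝ) - (k : ℝ))⁻¹ * (a + (j : ℝ))) := by
  classical
  set v : ℕ → ℝ := fun k => -(k : ℝ) with hv
  set f : ℝ[X] := (X + C 2) ^ N - X ^ N with hf
  have hvs : Set.InjOn v (Finset.Icc 1 N : Finset ℕ) := by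
    intro i _ j _ h
    simp only [v, neg_inj, Nat.cast_inj] at h
    exact h
  have hmon : ((X + C (2 : ℝ)) ^ N).Monic := (monic_X_add_C (2 : ℝ)).pow N
  have hdeg : f.degree < (Finset.Icc 1 N).card := by
    rw [Nat.card_Icc]
    have h1 : ((X + C (2 : ℝ)) ^ N).degree = (X ^ N : ℝ[X]).degree := by
      rw [degree_pow, degree_X_add_C, degree_X_pow]
      simp
    have := degree_sub_lt h1 hmon.ne_zero (by
      rw [hmon.leadingCoeff, (monic_X_pow N).leadingCoeff])
    rw [hf]
    calc ((X + C (2:ℝ)) ^ N - X ^ N).degree < ((X + C (2 : ℝ)) ^ N).degree := this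
      _ ≤ (N : WithBot ℕ) := by
          rw [degree_pow, degree_X_add_C]; simp
      _ = ((N + 1 - 1 : ℕ) : WithBot ℕ) := by norm_num
  have hinterp := Lagrange.eq_interpolate hvs hdeg
  have heval := congrArg (Polynomial.eval a) hinterp
  rw [Lagrange.interpolate_apply, Polynomial.eval_finset_sum] at heval
  have hlhs : Polynomial.eval a f = (a + 2) ^ N - a ^ N := by simp [hf]
  rw [hlhs] at heval
  rw [heval]
  refine Finset.sum_congr rfl fun k hk => ?_
  simp only [Finset.mem_Icc] at hk
  rw [eval_mul, eval_C, Lagrange.basis, Polynomial.eval_prod]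
  congr 1
  · simp only [hf, v]
    simp only [eval_sub, eval_pow, eval_add, eval_X, eval_C]
    ring_nf
  · refine Finset.prod_congr rfl fun j hj => ?_
    simp only [Lagrange.basisDivisor, eval_mul, eval_C, eval_sub, eval_X, v]
    rw [show -(k : ℝ) - -(j : ℝ) = (j : ℝ) - k from by ring,
      show a - -(j : ℝ) = a + j from by ring]

lemma prod_range_Icc (N : ℕ) (a : ℝ) :
    ∏ i ∈ Finset.range N, (a + (N : ℝ) - (i : ℝ)) = ∏ j ∈ Finset.Icc 1 N, (a + (j : ℝ)) := by
  refine Finset.prod_nbij' (fun i => N - i) (fun j => N - j) ?_ ?_ ?_ ?_ ?_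
  · intro x hx; simp only [Finset.mem_range, Finset.mem_Icc] at *; omega
  · intro x hx; simp only [Finset.mem_range, Finset.mem_Icc] at *; omega
  · intro x hx; simp only [Finset.mem_range] at *; omega
  · intro x hx; simp only [Finset.mem_Icc] at *; omega
  · intro x hx
    simp only [Finset.mem_range] at hx
    rw [Nat.cast_sub (by omega)]
    ring

lemma combine (N : ℕ) (hN : 1 ≤ N) (a : ℝ)
    (hak : ∀ k ∈ Finset.Icc 1 N, a + (k : ℝ) ≠ 0) :
    ((1 / (N.factorial : ℝ)) * ∏ j ∈ Finset.Icc 1 N, (a + (j : ℝ))) *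
        ∑ k ∈ Finset.Icc 1 N,
          ((-1 : ℝ) ^ k * (k : ℝ) / (a + (k : ℝ))) * (N.choose k : ℝ) *
            ((-(k : ℝ)) ^ N - (2 - (k : ℝ)) ^ N) / 2
      = ((a + 2) ^ N - a ^ N) / 2 := by
  rw [lagrange_key N hN a, Finset.sum_div, Finset.mul_sum]
  refine Finset.sum_congr rfl fun k hk => ?_
  have hmem := hk
  simp only [Finset.mem_Icc] at hk
  obtain ⟨hk1, hkN⟩ := hk
  obtain ⟨k', rfl⟩ : ∃ k', k = k' + 1 := ⟨k - 1, by omega⟩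
  have hprod : ∏ j ∈ Finset.Icc 1 N, (a + (j : ℝ))
      = (a + ((k' + 1 : ℕ) : ℝ)) * ∏ j ∈ (Finset.Icc 1 N).erase (k' + 1), (a + (j : ℝ)) :=
    (Finset.mul_prod_erase _ _ hmem).symm
  have hW : ∏ j ∈ (Finset.Icc 1 N).erase (k' + 1), (((j : ℝ) - ((k' + 1 : ℕ) : ℝ))⁻¹ * (a + (j : ℝ)))
      = (-1 : ℝ) ^ k' * ((k'.factorial : ℝ))⁻¹ * (((N - (k' + 1)).factorial : ℝ))⁻¹ *
        ∏ j ∈ (Finset.Icc 1 N).erase (k' + 1), (a + (j : ℝ)) := by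
    rw [Finset.prod_mul_distrib, Finset.prod_inv_distrib,
      W_eval N (k' + 1) (by omega) hkN, mul_inv, mul_inv,
      show k' + 1 - 1 = k' from rfl,
      show ((-1 : ℝ) ^ k')⁻¹ = (-1 : ℝ) ^ k' from by rw [← inv_pow]; norm_num]
  have hfacN : (N.factorial : ℝ)
      = (N.choose (k' + 1) : ℝ) * ((k' + 1 : ℕ) : ℝ) * (k'.factorial : ℝ)
        * ((N - (k' + 1)).factorial : ℝ) := by
    have h := Nat.choose_mul_factorial_mul_factorial hkN
    have : N.choose (k' + 1) * ((k' + 1) * k'.factorial) * (N - (k' + 1)).factorial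
        = N.factorial := by
      rw [← Nat.factorial_succ]; exact h
    push_cast [← this]
    ring
  rw [hprod, hW, hfacN]
  have h1 : a + ((k' + 1 : ℕ) : ℝ) ≠ 0 := hak _ hmem
  have h2 : (N.choose (k' + 1) : ℝ) ≠ 0 := by
    have := Nat.choose_pos (n := N) (k := k' + 1) hkN
    positivity
  have h3 : (k'.factorial : ℝ) ≠ 0 := by positivity
  have h4 : (((N - (k' + 1)).factorial : ℝ)) ≠ 0 := by positivity
  have h5 : ((k' + 1 : ℕ) : ℝ) ≠ 0 := by positivity
  push_cast at h1 h2 h3 h4 h5 ⊢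
  field_simp
  ring

/-- closed form of the variance. For `N ≥ 1` and `0 < |ε| < 1/(2N)`:
`m₂(N) = (2ε)^{N−1} · B · Σ_{k=1}^{N} [(−1)^k k/(1/(2ε)+k)] C(N,k) ((−k)^N − (2−k)^N)/2`
with `B = (1/N!) · Π_{i=0}^{N−1} (1/(2ε) + N − i)`. -/
theorem variance_closed_form (ε : ℝ) (N : ℕ) (hN : 1 ≤ N)
    (hε : 0 < |ε|) (hε' : |ε| < 1 / (2 * N)) :
    m ε 2 N =
      (2 * ε) ^ (N - 1) *
        ((1 / (N.factorial : ℝ)) * ∏ i ∈ Finset.range N, (1 / (2 * ε) + (N : ℝ) - (i : ℝ))) *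
        ∑ k ∈ Finset.Icc 1 N,
          ((-1 : ℝ) ^ k * (k : ℝ) / (1 / (2 * ε) + (k : ℝ))) * (N.choose k : ℝ) *
            ((-(k : ℝ)) ^ N - (2 - (k : ℝ)) ^ N) / 2 := by
  have hε0 : ε ≠ 0 := by
    intro h
    rw [h, abs_zero] at hε
    exact lt_irrefl 0 hε
  have h2ε : (2 : ℝ) * ε ≠ 0 := mul_ne_zero two_ne_zero hε0
  have hNpos : (0 : ℝ) < N := by
    have : (1 : ℝ) ≤ N := by exact_mod_cast hN
    linarith
  have hak : ∀ k ∈ Finset.Icc 1 N, 1 / (2 * ε) + (k : ℝ) ≠ 0 := by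
    intro k hk h
    simp only [Finset.mem_Icc] at hk
    have hkr : (1 : ℝ) ≤ k := by exact_mod_cast hk.1
    have hkN : (k : ℝ) ≤ N := by exact_mod_cast hk.2
    have h' : (k : ℝ) * (2 * ε) = -1 := by
      field_simp at h
      linarith
    have habs : |(k : ℝ)| * (|2| * |ε|) = 1 := by
      rw [← abs_mul, ← abs_mul, h']
      norm_num
    have h1 : |(k : ℝ)| = k := abs_of_nonneg (by linarith)
    have h2 : |(2 : ℝ)| = 2 := by norm_num
    have hε'' : |ε| * (2 * N) < 1 := (lt_div_iff₀ (by positivity)).mp hε'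
    rw [h1, h2] at habs
    nlinarith [abs_nonneg ε]
  rw [m2_closed ε N hε0, prod_range_Icc N (1 / (2 * ε)), mul_assoc,
    combine N hN (1 / (2 * ε)) hak]
  obtain ⟨M, rfl⟩ : ∃ M, N = M + 1 := ⟨N - 1, by omega⟩
  simp only [Nat.add_sub_cancel]
  have key : (1 / (2 * ε) + 2) = (1 + 4 * ε) / (2 * ε) := by field_simp; ring
  rw [key, div_pow, div_pow, one_pow, div_sub_div_same, pow_succ]
  field_simp
  ring
end

section
/- Closed form of the fourth moment: let N ≥ 1 and suppose 0 < |ε| < 1/(2N). Then m₄(N) = (2ε)^{N−1} · B · Σ_{k=1}^{N} (−1)^{k+1} · k · ε · C(N,k) · [ −4(2−k)^N + 3(4−k)^N + (−k)^N + 3k·( 2(2−k)^N − (4−k)^N − (−k)^N ) ] / (2 + 4kε), where C denotes the binomial coefficient and B = (1/N!) · Π_{i=0}^{N−1} (1/(2ε) + N − i). -/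
open Polynomial Finset

section Moments

variable (ε : ℝ)

theorem P_eq_zero_of_lt_abs_s12 {n : ℕ} {x : ℤ} (h : (n : ℤ) < |x|) : P ε n x = 0 := by
  induction n generalizing x with
  | zero => simp_all [P]
  | succ n ih =>
    rw [Nat.cast_succ, lt_abs] at h
    simp [P, ih (x := x + 1) (by rw [lt_abs]; omega), ih (x := x - 1) (by rw [lt_abs]; omega)]

theorem summable_mul_P (g : ℤ → ℝ) (n : ℕ) : Summable fun x => g x * P ε n x :=
  summable_of_ne_finset_zero (s := Icc (-(n : ℤ)) n) fun x hx => by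
    rw [P_eq_zero_of_lt_abs_s12 ε (by rw [mem_Icc, not_and_or] at hx; rw [lt_abs]; omega), mul_zero]

theorem tsum_mul_P_succ (g : ℤ → ℝ) (n : ℕ) :
    ∑' x, g x * P ε (n + 1) x =
      ∑' y : ℤ, (g (y - 1) * (1 / 2 - y * ε) + g (y + 1) * (1 / 2 + y * ε)) * P ε n y := by
  set F₁ : ℤ → ℝ := fun y => g (y - 1) * (1 / 2 - y * ε) * P ε n y
  set F₂ : ℤ → ℝ := fun y => g (y + 1) * (1 / 2 + y * ε) * P ε n y
  have h₁ : Summable F₁ := summable_mul_P ε _ n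
  have h₂ : Summable F₂ := summable_mul_P ε _ n
  calc ∑' x, g x * P ε (n + 1) x = ∑' x, (F₁ (x + 1) + F₂ (x + -1)) := by
        refine tsum_congr fun x => ?_
        simp only [F₁, F₂, P, add_sub_cancel_right, ← sub_eq_add_neg, sub_add_cancel]
        push_cast
        ring
    _ = ∑' y, F₁ y + ∑' y, F₂ y :=
        (((Equiv.addRight 1).summable_iff.mpr h₁).tsum_add
          ((Equiv.addRight (-1)).summable_iff.mpr h₂)).trans
          (congr_arg₂ _ ((Equiv.addRight 1).tsum_eq F₁) ((Equiv.addRight (-1)).tsum_eq F₂))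
    _ = _ := by
        rw [← h₁.tsum_add h₂]
        exact tsum_congr fun y => by ring

theorem hasSum_m (k n : ℕ) : HasSum (fun x : ℤ => (x : ℝ) ^ k * P ε n x) (m ε k n) :=
  (summable_mul_P ε _ n).hasSum

theorem m_succ (k n : ℕ) :
    m ε k (n + 1) =
      ∑' y : ℤ, (((y : ℝ) - 1) ^ k * (1 / 2 - y * ε) + ((y : ℝ) + 1) ^ k * (1 / 2 + y * ε)) *
        P ε n y := by
  simpa only [m, Int.cast_sub, Int.cast_add, Int.cast_one] using
    tsum_mul_P_succ ε (fun x => (x : ℝ) ^ k) n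

theorem m_initial (k : ℕ) : m ε k 0 = 0 ^ k := by
  rw [m, tsum_eq_single 0 fun x hx => by simp [P, hx]]
  simp [P]

theorem m_zero_moment_eq_one (n : ℕ) : m ε 0 n = 1 := by
  induction n with
  | zero => simp [m_initial]
  | succ n ih =>
    rw [← ih, m_succ, m]
    exact tsum_congr fun y => by ring

theorem second_moment_succ (n : ℕ) : m ε 2 (n + 1) = (1 + 4 * ε) * m ε 2 n + 1 := by
  have h₀ := hasSum_m ε 0 n
  rw [m_zero_moment_eq_one] at h₀
  rw [m_succ]
  refine (((hasSum_m ε 2 n).mul_left _).add h₀).tsum_eq ▸ tsum_congr fun y => ?_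
  ring

theorem fourth_moment_succ (n : ℕ) :
    m ε 4 (n + 1) = (1 + 8 * ε) * m ε 4 n + (6 + 8 * ε) * m ε 2 n + 1 := by
  have h₀ := hasSum_m ε 0 n
  rw [m_zero_moment_eq_one] at h₀
  rw [m_succ]
  refine ((((hasSum_m ε 4 n).mul_left _).add ((hasSum_m ε 2 n).mul_left _)).add
    h₀).tsum_eq ▸ tsum_congr fun y => ?_
  ring

theorem second_moment_eq (n : ℕ) : 4 * ε * m ε 2 n = (1 + 4 * ε) ^ n - 1 := by
  induction n with
  | zero => simp [m_initial]
  | succ n ih => rw [second_moment_succ, pow_succ]; linear_combination (1 + 4 * ε) * ih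

theorem fourth_moment_eq (n : ℕ) :
    16 * ε ^ 2 * m ε 4 n =
      (3 + 6 * ε) * (1 + 8 * ε) ^ n - (6 + 8 * ε) * (1 + 4 * ε) ^ n + (3 + 2 * ε) := by
  induction n with
  | zero => simp [m_initial]; ring
  | succ n ih =>
    rw [fourth_moment_succ, pow_succ, pow_succ]
    linear_combination (1 + 8 * ε) * ih + 4 * ε * (6 + 8 * ε) * second_moment_eq ε n

end Moments

theorem coeff_linear_mul_X_add_C_pow_succ {R : Type*} [Semiring R] (a b c : R) (n k : ℕ) :
    ((C a * X + C b) * (X + C c) ^ n).coeff (k + 1) =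
      a * (c ^ (n - k) * n.choose k) + b * (c ^ (n - (k + 1)) * n.choose (k + 1)) := by
  rw [add_mul, mul_assoc, coeff_add, coeff_C_mul, coeff_X_mul, coeff_C_mul, coeff_X_add_C_pow,
    coeff_X_add_C_pow]

noncomputable def fourthMomentPoly (N : ℕ) : ℝ[X] :=
  (C 3 * X + C 3) * (X + C 4) ^ N - (C 6 * X + C 4) * (X + C 2) ^ N + (C 3 * X + C 1) * X ^ N

theorem degree_fourthMomentPoly_lt (N : ℕ) : (fourthMomentPoly N).degree < N := by
  rw [degree_lt_iff_coeff_zero]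
  intro i hi
  have hX : (X : ℝ[X]) ^ N = (X + C 0) ^ N := by rw [C_0, add_zero]
  rcases i with _ | j
  · obtain rfl : N = 0 := by omega
    norm_num [fourthMomentPoly]
  simp only [fourthMomentPoly, hX, coeff_add, coeff_sub, coeff_linear_mul_X_add_C_pow_succ]
  rcases lt_trichotomy j N with hj | rfl | hj
  · obtain rfl : N = j + 1 := by omega
    simp only [add_tsub_cancel_left, tsub_self, pow_one, pow_zero, Nat.choose_succ_self_right,
      Nat.choose_self, Nat.cast_add, Nat.cast_one]
    ring
  · norm_num
  · simp [Nat.choose_eq_zero_of_lt hj, Nat.choose_eq_zero_of_lt (hj.trans (Nat.lt_succ_self j))]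

theorem eval_neg_natCast_fourthMomentPoly (N k : ℕ) :
    (fourthMomentPoly N).eval (-(k : ℝ)) =
      -4 * (2 - (k : ℝ)) ^ N + 3 * (4 - (k : ℝ)) ^ N + (-(k : ℝ)) ^ N +
        3 * (k : ℝ) * (2 * (2 - (k : ℝ)) ^ N - (4 - (k : ℝ)) ^ N - (-(k : ℝ)) ^ N) := by
  simp only [fourthMomentPoly, eval_add, eval_sub, eval_mul, eval_pow, eval_C, eval_X]
  ring

theorem two_mul_pow_mul_eval_fourthMomentPoly {ε : ℝ} (hε : ε ≠ 0) (N : ℕ) :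
    (2 * ε) ^ (N + 1) * (fourthMomentPoly N).eval (1 / (2 * ε)) =
      (3 + 6 * ε) * (1 + 8 * ε) ^ N - (6 + 8 * ε) * (1 + 4 * ε) ^ N + (3 + 2 * ε) := by
  set u := 1 / (2 * ε)
  have hu : 2 * ε * u = 1 := mul_one_div_cancel (mul_ne_zero two_ne_zero hε)
  simp only [fourthMomentPoly, eval_add, eval_sub, eval_mul, eval_pow, eval_C, eval_X]
  calc (2 * ε) ^ (N + 1) *
        ((3 * u + 3) * (u + 4) ^ N - (6 * u + 4) * (u + 2) ^ N + (3 * u + 1) * u ^ N)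
      = 2 * ε * (3 * u + 3) * (2 * ε * (u + 4)) ^ N
          - 2 * ε * (6 * u + 4) * (2 * ε * (u + 2)) ^ N
          + 2 * ε * (3 * u + 1) * (2 * ε * u) ^ N := by simp only [mul_pow, pow_succ]; ring
    _ = _ := by
      rw [show 2 * ε * (u + 4) = 1 + 8 * ε by linear_combination hu,
        show 2 * ε * (u + 2) = 1 + 4 * ε by linear_combination hu, hu, one_pow]
      linear_combination (3 * (1 + 8 * ε) ^ N - 6 * (1 + 4 * ε) ^ N + 3) * hu

theorem prod_range_add_natCast_sub {R : Type*} [CommRing R] (x : R) (N : ℕ) :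
    ∏ i ∈ range N, (x + N - i) = ∏ j ∈ Icc 1 N, (x + j) := by
  rw [← prod_range_reflect, ← Ico_add_one_right_eq_Icc, prod_Ico_eq_prod_range,
    add_tsub_cancel_right]
  refine prod_congr rfl fun i hi => ?_
  rw [mem_range] at hi
  rw [Nat.cast_sub (by omega), Nat.cast_sub (by omega)]
  push_cast
  ring

theorem prod_Icc_erase_natCast_sub {R : Type*} [CommRing R] {N k : ℕ} (hk : k ∈ Icc 1 N) :
    ∏ j ∈ (Icc 1 N).erase k, ((j : R) - k) =
      (-1) ^ (k - 1) * (k - 1).factorial * (N - k).factorial := by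
  rw [mem_Icc] at hk
  have hsplit : (Icc 1 N).erase k = Ico 1 k ∪ Ioc k N := by
    ext j
    simp only [mem_erase, mem_Icc, mem_union, mem_Ico, mem_Ioc]
    omega
  have hdisj : Disjoint (Ico 1 k) (Ioc k N) :=
    disjoint_left.mpr fun j hj hj' => by simp only [mem_Ico, mem_Ioc] at hj hj'; omega
  have below : ∏ j ∈ Ico 1 k, ((j : R) - k) = (-1) ^ (k - 1) * (k - 1).factorial :=
    calc ∏ j ∈ Ico 1 k, ((j : R) - k)
        = ∏ i ∈ range (k - 1), (((1 + (k - 1 - 1 - i) : ℕ) : R) - k) := by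
          rw [prod_Ico_eq_prod_range, prod_range_reflect (fun i => ((1 + i : ℕ) : R) - k)]
      _ = ∏ i ∈ range (k - 1), (-1 * ((i + 1 : ℕ) : R)) := by
          refine prod_congr rfl fun i hi => ?_
          rw [mem_range] at hi
          rw [show 1 + (k - 1 - 1 - i) = k - (i + 1) by omega, Nat.cast_sub (by omega)]
          ring
      _ = _ := by
          rw [prod_mul_distrib, prod_const, card_range, ← Nat.cast_prod,
            prod_range_add_one_eq_factorial]
  have above : ∏ j ∈ Ioc k N, ((j : R) - k) = (N - k).factorial := by
    rw [← Ico_add_one_add_one_eq_Ioc, prod_Ico_eq_prod_range, Nat.add_sub_add_right,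
      ← prod_range_add_one_eq_factorial, Nat.cast_prod]
    refine prod_congr rfl fun i _ => ?_
    push_cast
    ring
  rw [hsplit, prod_union hdisj, below, above]

theorem nodalWeight_Icc_neg_natCast {F : Type*} [Field F] [CharZero F] {N k : ℕ}
    (hk : k ∈ Icc 1 N) :
    Lagrange.nodalWeight (Icc 1 N) (fun j => -(j : F)) k =
      (-1) ^ (k + 1) * k * N.choose k / N.factorial := by
  have hk' := mem_Icc.mp hk
  have hfact : (N.factorial : F) = N.choose k * (k * (k - 1).factorial) * (N - k).factorial := by
    rw [← Nat.choose_mul_factorial_mul_factorial hk'.2, ← Nat.mul_factorial_pred (by omega)]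
    push_cast
    ring
  have hsign : (-1 : F) ^ (k + 1) = (-1) ^ (k - 1) := by
    rw [show k + 1 = k - 1 + 2 by omega, pow_add, neg_one_sq, mul_one]
  simp only [Lagrange.nodalWeight, neg_sub_neg, prod_inv_distrib, prod_Icc_erase_natCast_sub hk,
    hfact, hsign]
  have hk₀ : (k : F) ≠ 0 := by exact_mod_cast (by omega : k ≠ 0)
  have hC : (N.choose k : F) ≠ 0 := by exact_mod_cast (Nat.choose_pos hk'.2).ne'
  have hsq : ((-1 : F) ^ (k - 1)) ^ 2 = 1 := by
    rw [← pow_mul, mul_comm, pow_mul, neg_one_sq, one_pow]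
  field_simp
  rw [hsq]

theorem eval_eq_barycentric_of_degree_lt {F : Type*} [Field F] [CharZero F] {f : F[X]} {N : ℕ}
    (hf : f.degree < N) {x : F} (hx : ∀ k ∈ Icc 1 N, x + k ≠ 0) :
    f.eval x = (∏ j ∈ Icc 1 N, (x + j)) *
      ∑ k ∈ Icc 1 N,
        (-1) ^ (k + 1) * k * N.choose k / N.factorial * (x + k)⁻¹ * f.eval (-(k : F)) := by
  have hinj : Set.InjOn (fun j : ℕ => -(j : F)) (Icc 1 N) := fun a _ b _ h => by simpa using h
  have hcard : f.degree < #(Icc 1 N) := by rwa [Nat.card_Icc, add_tsub_cancel_right]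
  rw [congrArg (eval x) (Lagrange.eq_interpolate hinj hcard),
    Lagrange.eval_interpolate_not_at_node _ fun k hk => by
      simpa [← sub_eq_zero, sub_neg_eq_add] using hx k hk,
    Lagrange.eval_nodal]
  simp only [sub_neg_eq_add]
  exact congrArg₂ _ rfl (sum_congr rfl fun k hk => by rw [nodalWeight_Icc_neg_natCast hk])

theorem one_add_two_mul_pos_of_abs_lt {ε : ℝ} {N k : ℕ} (hε : |ε| < 1 / (2 * N))
    (hk : k ≤ N) : 0 < 1 + 2 * k * ε := by
  have h2N : 0 < 2 * (N : ℝ) := one_div_pos.mp ((abs_nonneg ε).trans_lt hε)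
  have hkN : (k : ℝ) ≤ N := by exact_mod_cast hk
  rw [lt_div_iff₀ h2N] at hε
  nlinarith [neg_abs_le ε, abs_nonneg ε]

/-- closed form of the fourth moment. For `N ≥ 1` and `0 < |ε| < 1/(2N)`:
`m₄(N) = (2ε)^{N−1} · B · Σ_{k=1}^{N} (−1)^{k+1} k ε C(N,k)
  [−4(2−k)^N + 3(4−k)^N + (−k)^N + 3k(2(2−k)^N − (4−k)^N − (−k)^N)]/(2 + 4kε)`
with `B = (1/N!) · Π_{i=0}^{N−1} (1/(2ε) + N − i)`. -/
theorem fourth_moment_closed_form (ε : ℝ) (N : ℕ) (hN : 1 ≤ N)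
    (hε : 0 < |ε|) (hε' : |ε| < 1 / (2 * N)) :
    m ε 4 N =
      (2 * ε) ^ (N - 1) *
        ((1 / (N.factorial : ℝ)) * ∏ i ∈ Finset.range N, (1 / (2 * ε) + (N : ℝ) - (i : ℝ))) *
        ∑ k ∈ Finset.Icc 1 N,
          (-1 : ℝ) ^ (k + 1) * (k : ℝ) * ε * (N.choose k : ℝ) *
            (-4 * (2 - (k : ℝ)) ^ N + 3 * (4 - (k : ℝ)) ^ N + (-(k : ℝ)) ^ N +
              3 * (k : ℝ) *
                (2 * (2 - (k : ℝ)) ^ N - (4 - (k : ℝ)) ^ N - (-(k : ℝ)) ^ N)) /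
            (2 + 4 * (k : ℝ) * ε) := by
  have hε₀ : ε ≠ 0 := abs_pos.mp hε
  have hpos : ∀ k ∈ Icc 1 N, 0 < 1 + 2 * k * ε := fun k hk =>
    one_add_two_mul_pos_of_abs_lt hε' (mem_Icc.mp hk).2
  have hnode : ∀ k ∈ Icc 1 N, 1 / (2 * ε) + k ≠ 0 := fun k hk => by
    rw [div_add' _ _ _ (mul_ne_zero two_ne_zero hε₀)]
    exact div_ne_zero (by linarith [hpos k hk]) (mul_ne_zero two_ne_zero hε₀)
  have hm : m ε 4 N = (2 * ε) ^ (N - 1) / 4 * (fourthMomentPoly N).eval (1 / (2 * ε)) := by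
    have h := fourth_moment_eq ε N
    rw [← two_mul_pow_mul_eval_fourthMomentPoly hε₀, show N + 1 = N - 1 + 2 by omega,
      pow_add] at h
    refine mul_left_cancel₀ (pow_ne_zero 2 (mul_ne_zero two_ne_zero hε₀)) ?_
    linear_combination h / 4
  rw [hm, eval_eq_barycentric_of_degree_lt (degree_fourthMomentPoly_lt N) hnode,
    prod_range_add_natCast_sub]
  simp only [mul_sum]
  refine sum_congr rfl fun k hk => ?_
  have hinv : (1 / (2 * ε) + k)⁻¹ = 4 * (ε / (2 + 4 * k * ε)) := by
    have h2 : 2 + 4 * (k : ℝ) * ε ≠ 0 := by linarith [hpos k hk]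
    rw [inv_eq_iff_eq_inv]
    field_simp
    ring
  rw [eval_neg_natCast_fourthMomentPoly, hinv]
  ring
end
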